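/- arXiv:1401.2410 — 3 statements merged into one kernel-verified Lean document; each statement's English description precedes it below -/
import Mathlib

section
/- Let U : [0, p_N] → ℝ be a continuous, concave, non-increasing piecewise linear function with breakpoints 0 = p_0 < p_1 < ... < p_N and slopes satisfying 0 ≥ w_1 > w_2 > ... > w_N on the successive segments, and let h > 0, γ ∈ [0,1]. Suppose 1/h ∈ [−1/w_i − p_i, −1/w_i − p_{i−1}] ∩ [0, ∞) for some 1 ≤ i ≤ N−1 (where γ is absorbed into U so w_i are the slopes of γ·U). Then p* = −1/w_i − 1/h is a maximizer of g(p) = log(1 + p·h) + γ·U(p) over [0, p_N]. -/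
theorem stmt_10 (N : ℕ) (hN : 1 ≤ N) (pt w : ℕ → ℝ) (U : ℝ → ℝ) (γ h : ℝ)
    (hpt0 : pt 0 = 0)
    (hptmono : ∀ i : ℕ, i < N → pt i < pt (i + 1))
    (hw1 : w 1 ≤ 0)
    (hwdec : ∀ i : ℕ, 1 ≤ i → i < N → w (i + 1) < w i)
    (hlin : ∀ i : ℕ, 1 ≤ i → i ≤ N → ∀ x ∈ Set.Icc (pt (i - 1)) (pt i),
      γ * U x = γ * U (pt (i - 1)) + w i * (x - pt (i - 1)))
    (hh : 0 < h) (hγ : γ ∈ Set.Icc (0 : ℝ) 1)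
    (i : ℕ) (hi1 : 1 ≤ i) (hiN : i ≤ N - 1)
    (hmem : 1 / h ∈ Set.Icc (-1 / w i - pt i) (-1 / w i - pt (i - 1)) ∩ Set.Ici 0) :
    IsMaxOn (fun p => Real.log (1 + p * h) + γ * U p) (Set.Icc 0 (pt N))
      (-1 / w i - 1 / h) := by
  obtain ⟨⟨hm1, hm2⟩, hm0⟩ := hmem
  obtain ⟨i0, rfl⟩ : ∃ m, i = m + 1 := ⟨i - 1, by omega⟩
  simp only [Nat.add_sub_cancel] at hm1 hm2 ⊢
  have hiN' : i0 + 1 < N := by omega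
  have ptmono : ∀ j k : ℕ, j ≤ k → k ≤ N → pt j ≤ pt k := by
    intro j k hjk hkN
    induction k with
    | zero => simp [Nat.le_zero.mp hjk]
    | succ n ih =>
      rcases Nat.lt_or_ge j (n + 1) with hc | hc
      · exact le_trans (ih (by omega) (by omega)) (le_of_lt (hptmono n (by omega)))
      · have : j = n + 1 := by omega
        simp [this]
  have hpti0 : 0 ≤ pt i0 := hpt0 ▸ ptmono 0 i0 (by omega) (by omega)
  have wmono : ∀ j k : ℕ, 1 ≤ j → j ≤ k → k ≤ N → w k ≤ w j := by
    intro j k hj hjk hkN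
    induction k with
    | zero => omega
    | succ n ih =>
      rcases Nat.lt_or_ge j (n + 1) with hc | hc
      · exact le_trans (le_of_lt (hwdec n (by omega) (by omega))) (ih (by omega) (by omega))
      · have : j = n + 1 := by omega
        simp [this]
  have h1h : 0 < 1 / h := by positivity
  have hwi : w (i0 + 1) < 0 := by
    by_contra hc
    push_neg at hc
    have hle : -1 / w (i0 + 1) ≤ 0 := by
      rcases eq_or_lt_of_le hc with h0 | h0
      · simp [← h0]
      · have := div_pos one_pos h0
        rw [neg_div]
        linarith
    linarith
  set ps : ℝ := -1 / w (i0 + 1) - 1 / h with hps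
  clear_value ps
  have hps1 : pt i0 ≤ ps := by simp only [hps]; linarith
  have hps2 : ps ≤ pt (i0 + 1) := by simp only [hps]; linarith
  have hden : 1 + ps * h = -h / w (i0 + 1) := by
    rw [hps, sub_mul, div_mul_cancel₀ (1:ℝ) hh.ne']; ring
  have hdenpos : 0 < 1 + ps * h := by
    rw [hden, neg_div]
    exact neg_pos.mpr (div_neg_of_pos_of_neg hh hwi)
  -- value of γU at ps
  have hUps : γ * U ps = γ * U (pt i0) + w (i0 + 1) * (ps - pt i0) :=
    hlin (i0 + 1) (by omega) (by omega) ps ⟨by simpa using hps1, by simpa using hps2⟩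
  -- M j := γ * U (pt j) - w (i0+1) * pt j ; chain lemmas
  have step_up : ∀ j : ℕ, j < i0 + 1 →
      γ * U (pt j) - w (i0 + 1) * pt j ≤ γ * U (pt (j + 1)) - w (i0 + 1) * pt (j + 1) := by
    intro j hj
    have hseg := hlin (j + 1) (by omega) (by omega) (pt (j + 1))
      ⟨by simpa using (ptmono j (j+1) (by omega) (by omega)), by simp⟩
    simp only [Nat.add_sub_cancel] at hseg
    have hw' : w (i0 + 1) ≤ w (j + 1) := wmono (j + 1) (i0 + 1) (by omega) (by omega) (by omega)
    have hp' : pt j ≤ pt (j + 1) := ptmono j (j + 1) (by omega) (by omega)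
    nlinarith [mul_nonneg (sub_nonneg.mpr hw') (sub_nonneg.mpr hp')]
  have Mup : ∀ j : ℕ, j ≤ i0 + 1 →
      γ * U (pt j) - w (i0 + 1) * pt j ≤ γ * U (pt (i0 + 1)) - w (i0 + 1) * pt (i0 + 1) := by
    have : ∀ d : ℕ, ∀ j : ℕ, j + d = i0 + 1 →
        γ * U (pt j) - w (i0 + 1) * pt j ≤ γ * U (pt (i0 + 1)) - w (i0 + 1) * pt (i0 + 1) := by
      intro d
      induction d with
      | zero => intro j hj; simp [show j = i0 + 1 by omega]
      | succ n ih =>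
        intro j hj
        exact le_trans (step_up j (by omega)) (ih (j + 1) (by omega))
    intro j hj
    exact this (i0 + 1 - j) j (by omega)
  have step_down : ∀ j : ℕ, i0 + 1 ≤ j → j < N →
      γ * U (pt (j + 1)) - w (i0 + 1) * pt (j + 1) ≤ γ * U (pt j) - w (i0 + 1) * pt j := by
    intro j hj hjN
    have hseg := hlin (j + 1) (by omega) (by omega) (pt (j + 1))
      ⟨by simpa using (ptmono j (j+1) (by omega) (by omega)), by simp⟩
    simp only [Nat.add_sub_cancel] at hseg
    have hw' : w (j + 1) ≤ w (i0 + 1) := wmono (i0 + 1) (j + 1) (by omega) (by omega) (by omega)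
    have hp' : pt j ≤ pt (j + 1) := ptmono j (j + 1) (by omega) (by omega)
    nlinarith [mul_nonneg (sub_nonneg.mpr hw') (sub_nonneg.mpr hp')]
  have Mdown : ∀ j : ℕ, i0 + 1 ≤ j → j ≤ N →
      γ * U (pt j) - w (i0 + 1) * pt j ≤ γ * U (pt (i0 + 1)) - w (i0 + 1) * pt (i0 + 1) := by
    have : ∀ d : ℕ, i0 + 1 + d ≤ N →
        γ * U (pt (i0 + 1 + d)) - w (i0 + 1) * pt (i0 + 1 + d) ≤
          γ * U (pt (i0 + 1)) - w (i0 + 1) * pt (i0 + 1) := by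
      intro d
      induction d with
      | zero => intro _; simp
      | succ n ih =>
        intro hd
        exact le_trans (step_down (i0 + 1 + n) (by omega) (by omega)) (ih (by omega))
    intro j hj hjN
    have := this (j - (i0 + 1)) (by omega)
    simpa [show i0 + 1 + (j - (i0 + 1)) = j by omega] using this
  -- segment existence
  have seg : ∀ n : ℕ, 1 ≤ n → n ≤ N → ∀ x : ℝ, 0 ≤ x → x ≤ pt n →
      ∃ j : ℕ, 1 ≤ j ∧ j ≤ n ∧ pt (j - 1) ≤ x ∧ x ≤ pt j := by
    intro n
    induction n with
    | zero => omega
    | succ n ih =>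
      intro _ hn x hx0 hxn
      rcases le_or_gt x (pt n) with hc | hc
      · rcases Nat.eq_zero_or_pos n with rfl | hn1
        · exact ⟨1, le_refl 1, le_refl 1, by simpa [hpt0] using hx0, hxn⟩
        · obtain ⟨j, hj1, hj2, hj3, hj4⟩ := ih hn1 (by omega) x hx0 hc
          exact ⟨j, hj1, by omega, hj3, hj4⟩
      · exact ⟨n + 1, by omega, le_refl _, by simpa using hc.le, hxn⟩
  -- key bound: F x ≤ F ps for all x in [0, pt N]
  have key : ∀ x : ℝ, 0 ≤ x → x ≤ pt N →
      γ * U x - w (i0 + 1) * x ≤ γ * U ps - w (i0 + 1) * ps := by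
    intro x hx0 hxN
    have hFps : γ * U ps - w (i0 + 1) * ps = γ * U (pt i0) - w (i0 + 1) * pt i0 := by
      linarith [hUps]
    obtain ⟨j, hj1, hjN, hx1, hx2⟩ := seg N (by omega) (le_refl N) x hx0 hxN
    obtain ⟨m, rfl⟩ : ∃ m, j = m + 1 := ⟨j - 1, by omega⟩
    have hseg := hlin (m + 1) (by omega) (by omega) x ⟨by simpa using hx1, hx2⟩
    simp only [Nat.add_sub_cancel] at hseg hx1
    have hMi : γ * U (pt i0) - w (i0 + 1) * pt i0 =
        γ * U (pt (i0 + 1)) - w (i0 + 1) * pt (i0 + 1) := by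
      have := hlin (i0 + 1) (by omega) (by omega) (pt (i0 + 1))
        ⟨by simpa using (ptmono i0 (i0+1) (by omega) (by omega)), by simp⟩
      simp only [Nat.add_sub_cancel] at this
      linarith
    rcases le_or_gt (m + 1) (i0 + 1) with hc | hc
    · -- F x ≤ M (m+1) ≤ M (i0+1)
      have hw' : w (i0 + 1) ≤ w (m + 1) := wmono (m + 1) (i0 + 1) (by omega) hc (by omega)
      have hM := Mup (m + 1) hc
      have hseg2 := hlin (m + 1) (by omega) (by omega) (pt (m + 1))
        ⟨by simpa using (ptmono m (m + 1) (by omega) (by omega)), by simp⟩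
      simp only [Nat.add_sub_cancel] at hseg2
      have hprod : 0 ≤ (w (m + 1) - w (i0 + 1)) * (pt (m + 1) - x) :=
        mul_nonneg (by linarith) (by linarith)
      rw [hFps, hMi]
      linarith [hprod, hseg, hseg2, hM]
    · -- F x ≤ M m ≤ M (i0+1)
      have hw' : w (m + 1) ≤ w (i0 + 1) := wmono (i0 + 1) (m + 1) (by omega) (by omega) (by omega)
      have hM := Mdown m (by omega) (by omega)
      have hprod : 0 ≤ (w (i0 + 1) - w (m + 1)) * (x - pt m) :=
        mul_nonneg (by linarith) (by linarith)
      rw [hFps, hMi]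
      linarith [hprod, hseg, hM]
  -- final assembly
  rw [isMaxOn_iff]
  intro p hp
  obtain ⟨hp0, hpN⟩ := hp
  have h1p : (0:ℝ) < 1 + p * h := by nlinarith
  have hlog : Real.log (1 + p * h) - Real.log (1 + ps * h) ≤ -w (i0 + 1) * (p - ps) := by
    have hq : 0 < (1 + p * h) / (1 + ps * h) := div_pos h1p hdenpos
    have hle := Real.log_le_sub_one_of_pos hq
    rw [Real.log_div (ne_of_gt h1p) (ne_of_gt hdenpos)] at hle
    have hw0 : w (i0 + 1) ≠ 0 := ne_of_lt hwi
    have hne : 1 + ps * h ≠ 0 := ne_of_gt hdenpos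
    have hwps : w (i0 + 1) * (1 + ps * h) = -h := by
      rw [hden, mul_comm, div_mul_cancel₀ _ hw0]
    have he : (1 + p * h) / (1 + ps * h) - 1 = -w (i0 + 1) * (p - ps) := by
      rw [div_sub_one hne, div_eq_iff hne]
      linear_combination (p - ps) * hwps
    linarith [he ▸ hle]
  have hkey := key p hp0 hpN
  show Real.log (1 + p * h) + γ * U p ≤ Real.log (1 + ps * h) + γ * U ps
  linarith [hlog, hkey]
end

section
/- With the setup of the previous statement, if 1/h ∈ (−1/w_{i+1} − p_i, −1/w_i − p_i) ∩ [0, ∞) for some 1 ≤ i ≤ N−1, then the breakpoint p_i is a maximizer of g(p) = log(1 + p·h) + γ·U(p) over [0, p_N]. -/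
/-!
Both summands of `g` lie below a line through their value at `p_i`. For `log (1 + p h)` this is
concavity, with slope `1 / (1/h + p_i)`. For `γ U` the slopes decrease, so `γ U p - w_i p` is
monotone on `[0, p_i]` and `γ U p - w_{i+1} p` is antitone on `[p_i, p_N]`. The hypothesis on `1/h`
says exactly `1 / (1/h + p_i) + w_{i+1} < 0 < 1 / (1/h + p_i) + w_i`, so on either side of `p_i`
the resulting upper bound for `g p` is at most `g p_i`.
-/

open Set

theorem le_of_forall_le_succ_of_le {α : Type*} [Preorder α] {f : ℕ → α} {a b : ℕ} (hab : a ≤ b)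
    (hf : ∀ j, a ≤ j → j < b → f j ≤ f (j + 1)) : f a ≤ f b := by
  induction b, hab using Nat.le_induction with
  | base => exact le_rfl
  | succ b hab ih => exact (ih fun j h₁ h₂ ↦ hf j h₁ (by omega)).trans (hf b hab (by omega))

section Consecutive

variable {α β : Type*} [LinearOrder α] [Preorder β] {f : α → β} {pt : ℕ → α} {a b : ℕ}

theorem monotoneOn_Icc_of_consecutive (hab : a ≤ b)
    (hpt : ∀ j, a ≤ j → j < b → pt j ≤ pt (j + 1))
    (hf : ∀ j, a ≤ j → j < b → MonotoneOn f (Icc (pt j) (pt (j + 1)))) :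
    MonotoneOn f (Icc (pt a) (pt b)) := by
  induction b, hab using Nat.le_induction with
  | base => simp
  | succ b hab ih =>
    have hab' : pt a ≤ pt b := le_of_forall_le_succ_of_le hab fun j h₁ h₂ ↦ hpt j h₁ (by omega)
    have hb : pt b ≤ pt (b + 1) := hpt b hab (by omega)
    rw [← Icc_union_Icc_eq_Icc hab' hb]
    exact (ih (fun j h₁ h₂ ↦ hpt j h₁ (by omega)) fun j h₁ h₂ ↦ hf j h₁ (by omega)).union_right
      (hf b hab (by omega)) (isGreatest_Icc hab') (isLeast_Icc hb)

theorem antitoneOn_Icc_of_consecutive (hab : a ≤ b)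
    (hpt : ∀ j, a ≤ j → j < b → pt j ≤ pt (j + 1))
    (hf : ∀ j, a ≤ j → j < b → AntitoneOn f (Icc (pt j) (pt (j + 1)))) :
    AntitoneOn f (Icc (pt a) (pt b)) :=
  monotoneOn_Icc_of_consecutive (β := βᵒᵈ) hab hpt hf

end Consecutive

section Affine

variable {f : ℝ → ℝ} {a b s c : ℝ}

theorem monotoneOn_sub_mul_of_le_slope (hf : ∀ x ∈ Icc a b, f x = f a + s * (x - a))
    (hc : c ≤ s) : MonotoneOn (fun x ↦ f x - c * x) (Icc a b) := by
  intro x hx y hy hxy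
  simp only [hf x hx, hf y hy]
  nlinarith

theorem antitoneOn_sub_mul_of_slope_le (hf : ∀ x ∈ Icc a b, f x = f a + s * (x - a))
    (hc : s ≤ c) : AntitoneOn (fun x ↦ f x - c * x) (Icc a b) := by
  intro x hx y hy hxy
  simp only [hf x hx, hf y hy]
  nlinarith

end Affine

theorem Real.log_le_log_add_sub_div {a b : ℝ} (ha : 0 < a) (hb : 0 < b) :
    Real.log b ≤ Real.log a + (b - a) / a := by
  have := Real.log_le_sub_one_of_pos (div_pos hb ha)
  rw [Real.log_div hb.ne' ha.ne', div_sub_one ha.ne'] at this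
  linarith

theorem log_one_add_mul_le {h p q : ℝ} (hh : 0 < h) (hp : 0 ≤ p) (hq : 0 ≤ q) :
    Real.log (1 + p * h) ≤ Real.log (1 + q * h) + (p - q) * (1 / h + q)⁻¹ := by
  have key := Real.log_le_log_add_sub_div (a := 1 + q * h) (b := 1 + p * h) (by positivity)
    (by positivity)
  convert key using 2
  field_simp
  ring

theorem neg_of_lt_neg_inv {t w : ℝ} (ht : 0 < t) (htw : t < -1 / w) : w < 0 := by
  rw [neg_div, one_div, ← inv_neg] at htw
  exact neg_pos.mp (inv_pos.mp (ht.trans htw))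

theorem inv_add_pos_of_lt_neg_inv {t w : ℝ} (ht : 0 < t) (htw : t < -1 / w) : 0 < t⁻¹ + w := by
  have hw : 0 < -w := neg_pos.mpr (neg_of_lt_neg_inv ht htw)
  rw [neg_div, one_div, ← inv_neg] at htw
  linarith [(lt_inv_comm₀ ht hw).mp htw]

theorem inv_add_neg_of_neg_inv_lt {t w : ℝ} (hw : w < 0) (htw : -1 / w < t) : t⁻¹ + w < 0 := by
  rw [neg_div, one_div, ← inv_neg] at htw
  have hw' : 0 < -w := neg_pos.mpr hw
  linarith [(inv_lt_comm₀ hw' ((inv_pos.mpr hw').trans htw)).mp htw]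

theorem stmt_11_general (N : ℕ) (pt w : ℕ → ℝ) (U : ℝ → ℝ) (γ h : ℝ)
    (hpt0 : pt 0 = 0)
    (hptmono : ∀ i : ℕ, i < N → pt i < pt (i + 1))
    (hwdec : ∀ i : ℕ, 1 ≤ i → i < N → w (i + 1) < w i)
    (hlin : ∀ i : ℕ, 1 ≤ i → i ≤ N → ∀ x ∈ Set.Icc (pt (i - 1)) (pt i),
      γ * U x = γ * U (pt (i - 1)) + w i * (x - pt (i - 1)))
    (hh : 0 < h)
    (i : ℕ) (hi1 : 1 ≤ i) (hiN : i ≤ N - 1)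
    (hmem : 1 / h ∈ Set.Ioo (-1 / w (i + 1) - pt i) (-1 / w i - pt i) ∩ Set.Ici 0) :
    IsMaxOn (fun p => Real.log (1 + p * h) + γ * U p) (Set.Icc 0 (pt N)) (pt i) := by
  obtain ⟨⟨hlo, hhi⟩, -⟩ := hmem
  have hpt : ∀ j k, j ≤ k → k ≤ N → pt j ≤ pt k := fun j k hjk hk ↦
    le_of_forall_le_succ_of_le hjk fun l _ hl ↦ (hptmono l (by omega)).le
  have hw : ∀ j k, 1 ≤ j → j ≤ k → k ≤ N → w k ≤ w j := fun j k hj hjk hk ↦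
    le_of_forall_le_succ_of_le (α := ℝᵒᵈ) hjk fun l hl hlk ↦ (hwdec l (by omega) (by omega)).le
  have hseg : ∀ j < N, ∀ x ∈ Icc (pt j) (pt (j + 1)),
      γ * U x = γ * U (pt j) + w (j + 1) * (x - pt j) :=
    fun j hj ↦ by simpa using hlin (j + 1) (by omega) (by omega)
  have hpti : 0 ≤ pt i := hpt0 ▸ hpt 0 i i.zero_le (by omega)
  have ht : 0 < 1 / h + pt i := by positivity
  have hleft : 0 < (1 / h + pt i)⁻¹ + w i := inv_add_pos_of_lt_neg_inv ht (by linarith)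
  have hright : (1 / h + pt i)⁻¹ + w (i + 1) < 0 := by
    refine inv_add_neg_of_neg_inv_lt ?_ (by linarith)
    exact (hwdec i hi1 (by omega)).trans (neg_of_lt_neg_inv ht (by linarith))
  have hmono : MonotoneOn (fun x ↦ γ * U x - w i * x) (Icc (pt 0) (pt i)) :=
    monotoneOn_Icc_of_consecutive i.zero_le (fun j _ hj ↦ (hptmono j (by omega)).le) fun j _ hj ↦
      monotoneOn_sub_mul_of_le_slope (hseg j (by omega)) (hw (j + 1) i (by omega) hj (by omega))
  have hanti : AntitoneOn (fun x ↦ γ * U x - w (i + 1) * x) (Icc (pt i) (pt N)) :=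
    antitoneOn_Icc_of_consecutive (by omega) (fun j _ hj ↦ (hptmono j hj).le) fun j hj hjN ↦
      antitoneOn_sub_mul_of_slope_le (hseg j hjN) (hw (i + 1) (j + 1) (by omega) (by omega) hjN)
  rw [hpt0] at hmono
  refine isMaxOn_iff.2 fun p hp ↦ ?_
  have hlog := log_one_add_mul_le hh hp.1 hpti
  rcases le_total p (pt i) with hpi | hpi
  · have hU := hmono ⟨hp.1, hpi⟩ ⟨hpti, le_rfl⟩ hpi
    have := mul_nonneg (sub_nonneg.2 hpi) hleft.le
    simp only at hU ⊢
    linarith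
  · have hU := hanti ⟨le_rfl, hpt i N (by omega) le_rfl⟩ ⟨hpi, hp.2⟩ hpi
    have := mul_nonneg (sub_nonneg.2 hpi) (neg_nonneg.2 hright.le)
    simp only at hU ⊢
    linarith

theorem stmt_11 (N : ℕ) (hN : 1 ≤ N) (pt w : ℕ → ℝ) (U : ℝ → ℝ) (γ h : ℝ)
    (hpt0 : pt 0 = 0)
    (hptmono : ∀ i : ℕ, i < N → pt i < pt (i + 1))
    (hw1 : w 1 ≤ 0)
    (hwdec : ∀ i : ℕ, 1 ≤ i → i < N → w (i + 1) < w i)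
    (hlin : ∀ i : ℕ, 1 ≤ i → i ≤ N → ∀ x ∈ Set.Icc (pt (i - 1)) (pt i),
      γ * U x = γ * U (pt (i - 1)) + w i * (x - pt (i - 1)))
    (hh : 0 < h) (hγ : γ ∈ Set.Icc (0 : ℝ) 1)
    (i : ℕ) (hi1 : 1 ≤ i) (hiN : i ≤ N - 1)
    (hmem : 1 / h ∈ Set.Ioo (-1 / w (i + 1) - pt i) (-1 / w i - pt i) ∩ Set.Ici 0) :
    IsMaxOn (fun p => Real.log (1 + p * h) + γ * U p) (Set.Icc 0 (pt N)) (pt i) :=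
  stmt_11_general N pt w U γ h hpt0 hptmono hwdec hlin hh i hi1 hiN hmem
end

section
/- Let g(p) = log(1 + p·h) + γ·U(p) on [0, P] where U is concave, and suppose h₁ ≥ h₂ > 0. Then any maximizer p₁* of g with h = h₁ and p₂* with h = h₂ can be chosen with p₁* ≥ p₂*, i.e., the optimal power allocation p*(h) given in closed form (the generalized water-filling solution) is non-decreasing in h. -/
theorem stmt_18 (U : ℝ → ℝ) (P γ h₁ h₂ : ℝ) (hP : 0 < P) (hγ : 0 ≤ γ)
    (hconc : ConcaveOn ℝ (Set.Icc 0 P) U) (hcont : ContinuousOn U (Set.Icc 0 P))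
    (hh2 : 0 < h₂) (hh : h₂ ≤ h₁) :
    ∃ p₁ ∈ Set.Icc (0 : ℝ) P, ∃ p₂ ∈ Set.Icc (0 : ℝ) P,
      IsMaxOn (fun p => Real.log (1 + p * h₁) + γ * U p) (Set.Icc 0 P) p₁ ∧
      IsMaxOn (fun p => Real.log (1 + p * h₂) + γ * U p) (Set.Icc 0 P) p₂ ∧
      p₂ ≤ p₁ := by
  have hh1 : 0 < h₁ := lt_of_lt_of_le hh2 hh
  have hcomp : IsCompact (Set.Icc (0:ℝ) P) := isCompact_Icc
  have hne : (Set.Icc (0:ℝ) P).Nonempty := ⟨0, le_refl 0, hP.le⟩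
  have hcg : ∀ h : ℝ, 0 < h →
      ContinuousOn (fun p => Real.log (1 + p * h) + γ * U p) (Set.Icc 0 P) := by
    intro h hpos
    apply ContinuousOn.add
    · apply ContinuousOn.log
      · exact continuousOn_const.add (continuousOn_id.mul continuousOn_const)
      · intro x hx
        have : 0 ≤ x := hx.1
        nlinarith
    · exact continuousOn_const.mul hcont
  obtain ⟨p₁, hp₁mem, hp₁⟩ := hcomp.exists_isMaxOn hne (hcg h₁ hh1)
  obtain ⟨p₂, hp₂mem, hp₂⟩ := hcomp.exists_isMaxOn hne (hcg h₂ hh2)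
  rcases le_or_gt p₂ p₁ with hle | hlt
  · exact ⟨p₁, hp₁mem, p₂, hp₂mem, hp₁, hp₂, hle⟩
  · -- exchange: p₂ also maximizes the h₁ objective
    have h0p₁ : 0 ≤ p₁ := hp₁mem.1
    have h0p₂ : 0 ≤ p₂ := hp₂mem.1
    have a1 : (0:ℝ) < 1 + p₁ * h₁ := by nlinarith
    have a2 : (0:ℝ) < 1 + p₂ * h₁ := by nlinarith
    have b1 : (0:ℝ) < 1 + p₁ * h₂ := by nlinarith
    have b2 : (0:ℝ) < 1 + p₂ * h₂ := by nlinarith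
    -- increasing differences
    have key : Real.log (1 + p₂ * h₁) - Real.log (1 + p₁ * h₁) ≥
        Real.log (1 + p₂ * h₂) - Real.log (1 + p₁ * h₂) := by
      have hprod : (1 + p₂ * h₂) * (1 + p₁ * h₁) ≤ (1 + p₂ * h₁) * (1 + p₁ * h₂) := by
        nlinarith [mul_nonneg (sub_nonneg.2 hlt.le) (sub_nonneg.2 hh)]
      have := Real.log_le_log (by positivity) hprod
      rw [Real.log_mul b2.ne' a1.ne', Real.log_mul a2.ne' b1.ne'] at this
      linarith
    have hdiff : 0 ≤ Real.log (1 + p₂ * h₂) + γ * U p₂ -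
        (Real.log (1 + p₁ * h₂) + γ * U p₁) := by
      have := hp₂ hp₁mem
      simp only [Set.mem_setOf_eq] at this
      linarith
    have hmax1 : IsMaxOn (fun p => Real.log (1 + p * h₁) + γ * U p) (Set.Icc 0 P) p₂ := by
      intro x hx
      have hx1 := hp₁ hx
      simp only [Set.mem_setOf_eq] at hx1 ⊢
      linarith
    exact ⟨p₂, hp₂mem, p₂, hp₂mem, hmax1, hp₂, le_refl _⟩
end
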